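/- Let α ∈ (0,1), x ∈ (0, 1/2), and y ∈ (−1, 0). For real u > 0 with u ≠ 1, set r₂(u) = ((u+1)² + 2u(α² + α⁻²) − 2(α + α⁻¹)·√(u³ + (α² + α⁻²)u² + u))/(u−1)² (real square root) and f(u) = (1+y)·log u − log|u−1| + (1/2 − x)·log r₂(u). Then r₂(u) > 0 for all u > 0 with u ≠ 1, and: f(u) → +∞ as u → 1 within the positive reals distinct from 1; f(u) → −∞ as u → 0 from the right; and f(u) → −∞ as u → +∞. -/

import Mathlib

open Filter

/-- The restriction to the positive real axis of the eigenvalue `r_{α,2}`,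
`r₂(u) = ((u+1)² + 2u(α² + α⁻²) − 2(α + α⁻¹)√(u³ + (α² + α⁻²)u² + u))/(u−1)²`,
with the real square root. -/
noncomputable def r2R (α : ℝ) (u : ℝ) : ℝ :=
  ((u + 1)^2 + 2 * u * (α^2 + (α^2)⁻¹)
    - 2 * (α + α⁻¹) * Real.sqrt (u^3 + (α^2 + (α^2)⁻¹) * u^2 + u)) / (u - 1)^2

/-- The restriction to the positive real axis of `Re ψ₂(z; x, y)`:
`f(u) = (1+y)·log u − log|u−1| + (1/2 − x)·log r₂(u)`. -/
noncomputable def fR (α x y : ℝ) (u : ℝ) : ℝ :=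
  (1 + y) * Real.log u - Real.log |u - 1| + (1/2 - x) * Real.log (r2R α u)

/-- The "conjugate" denominator `D(u) = (u+1)² + 2u(α²+α⁻²) + 2(α+α⁻¹)√(u³+(α²+α⁻²)u²+u)`. -/
noncomputable def DD (α : ℝ) (u : ℝ) : ℝ :=
  (u + 1)^2 + 2 * u * (α^2 + (α^2)⁻¹)
    + 2 * (α + α⁻¹) * Real.sqrt (u^3 + (α^2 + (α^2)⁻¹) * u^2 + u)

lemma P_nonneg (α u : ℝ) (hu : 0 ≤ u) : 0 ≤ u^3 + (α^2 + (α^2)⁻¹) * u^2 + u := by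
  have hc : 0 ≤ α^2 + (α^2)⁻¹ := by positivity
  nlinarith [mul_nonneg (mul_nonneg hu hu) hu, mul_nonneg hc (mul_nonneg hu hu)]

lemma DD_pos (α : ℝ) (hα : 0 < α) (u : ℝ) (hu : 0 < u) : 0 < DD α u := by
  have hb : 0 < α + α⁻¹ := by positivity
  have hc : 0 < α^2 + (α^2)⁻¹ := by positivity
  have hs : 0 ≤ Real.sqrt (u^3 + (α^2 + (α^2)⁻¹) * u^2 + u) := Real.sqrt_nonneg _
  unfold DD
  nlinarith [mul_pos hu hc, mul_nonneg hb.le hs, sq_nonneg (u+1)]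

lemma DD_continuous (α : ℝ) : Continuous (DD α) := by
  unfold DD; fun_prop

lemma key_identity (α : ℝ) (hα : 0 < α) (u : ℝ) (hu : 0 ≤ u) :
    ((u + 1)^2 + 2 * u * (α^2 + (α^2)⁻¹)
      - 2 * (α + α⁻¹) * Real.sqrt (u^3 + (α^2 + (α^2)⁻¹) * u^2 + u)) * DD α u
    = (u - 1)^4 := by
  have hs : Real.sqrt (u^3 + (α^2 + (α^2)⁻¹) * u^2 + u) ^ 2
      = u^3 + (α^2 + (α^2)⁻¹) * u^2 + u := Real.sq_sqrt (P_nonneg α u hu)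
  have hb2 : (α + α⁻¹)^2 = (α^2 + (α^2)⁻¹) + 2 := by
    field_simp
    ring
  unfold DD
  linear_combination (-(4:ℝ) * (α + α⁻¹)^2) * hs
    + (-(4:ℝ) * (u^3 + (α^2 + (α^2)⁻¹) * u^2 + u)) * hb2

lemma r2R_eq (α : ℝ) (hα : 0 < α) (u : ℝ) (hu : 0 < u) (hu1 : u ≠ 1) :
    r2R α u = (u - 1)^2 / DD α u := by
  have h1 : u - 1 ≠ 0 := sub_ne_zero.2 hu1
  have hD := DD_pos α hα u hu
  rw [r2R, div_eq_div_iff (pow_ne_zero _ h1) hD.ne']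
  linear_combination key_identity α hα u hu.le

/-- For `α ∈ (0,1)`, `x ∈ (0,1/2)`, `y ∈ (−1,0)`: `r₂(u) > 0` for `u > 0`, `u ≠ 1`;
`f(u) → +∞` as `u → 1` within the positive reals distinct from `1`; `f(u) → −∞` as `u → 0⁺`;
and `f(u) → −∞` as `u → +∞`. -/
theorem stmt12 (α x y : ℝ) (hα : α ∈ Set.Ioo (0 : ℝ) 1)
    (hx : x ∈ Set.Ioo (0 : ℝ) (1/2)) (hy : y ∈ Set.Ioo (-1 : ℝ) 0) :
    (∀ u : ℝ, 0 < u → u ≠ 1 → 0 < r2R α u) ∧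
    Tendsto (fR α x y) (nhdsWithin 1 (Set.Ioi 0 \ {1})) atTop ∧
    Tendsto (fR α x y) (nhdsWithin 0 (Set.Ioi 0)) atBot ∧
    Tendsto (fR α x y) atTop atBot := by
  obtain ⟨hα0, hα1⟩ := hα
  obtain ⟨hx0, hx2⟩ := hx
  obtain ⟨hy1, hy0⟩ := hy
  have hpos : ∀ u : ℝ, 0 < u → u ≠ 1 → 0 < r2R α u := by
    intro u hu hu1
    rw [r2R_eq α hα0 u hu hu1]
    have h1 : u - 1 ≠ 0 := sub_ne_zero.2 hu1
    exact div_pos (by positivity) (DD_pos α hα0 u hu)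
  refine ⟨hpos, ?_, ?_, ?_⟩
  · -- limit at 1
    set L1 := nhdsWithin (1:ℝ) (Set.Ioi 0 \ {1}) with hL1
    have hmem : ∀ᶠ u in L1, u ∈ Set.Ioi 0 \ {1} := self_mem_nhdsWithin
    have heq : ∀ᶠ u in L1,
        (1+y) * Real.log u + 2*x * (-(Real.log |u-1|)) + (x - 1/2) * Real.log (DD α u)
          = fR α x y u := by
      filter_upwards [hmem] with u hu
      obtain ⟨hu0, hu1⟩ := hu
      have hu1' : u ≠ 1 := hu1
      have h1 : u - 1 ≠ 0 := sub_ne_zero.2 hu1'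
      have hD := DD_pos α hα0 u hu0
      have h2 : Real.log ((u-1)^2) = 2 * Real.log |u-1| := by
        rw [Real.log_pow, Real.log_abs]; push_cast; ring
      rw [fR, r2R_eq α hα0 u hu0 hu1', Real.log_div (pow_ne_zero _ h1) hD.ne', h2]
      ring
    have tlog1 : Tendsto (fun u => (1+y) * Real.log u) L1 (nhds 0) := by
      have : Tendsto Real.log L1 (nhds (Real.log 1)) :=
        ((Real.continuousAt_log one_ne_zero).continuousWithinAt (s := Set.Ioi 0 \ {1}))
      simpa using this.const_mul (1+y)
    have tabs : Tendsto (fun u : ℝ => |u-1|) L1 (nhdsWithin 0 (Set.Ioi 0)) := by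
      apply tendsto_nhdsWithin_of_tendsto_nhds_of_eventually_within
      · have hc : Continuous (fun u : ℝ => |u-1|) := by fun_prop
        have : Tendsto (fun u : ℝ => |u-1|) (nhds 1) (nhds 0) := by
          simpa using hc.tendsto 1
        exact this.mono_left nhdsWithin_le_nhds
      · filter_upwards [hmem] with u hu
        have : u ≠ 1 := hu.2
        exact abs_pos.2 (sub_ne_zero.2 this)
    have tbig : Tendsto (fun u : ℝ => 2*x * (-(Real.log |u-1|))) L1 atTop := by
      refine Tendsto.const_mul_atTop (by linarith) ?_
      exact tendsto_neg_atBot_atTop.comp (Real.tendsto_log_nhdsGT_zero.comp tabs)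
    have tD : Tendsto (fun u => (x - 1/2) * Real.log (DD α u)) L1
        (nhds ((x - 1/2) * Real.log (DD α 1))) := by
      have hD1 : (0:ℝ) < DD α 1 := DD_pos α hα0 1 one_pos
      have h : Tendsto (fun u => Real.log (DD α u)) L1 (nhds (Real.log (DD α 1))) :=
        ((Real.continuousAt_log hD1.ne').comp
          (DD_continuous α).continuousAt).continuousWithinAt
      exact h.const_mul _
    exact ((tlog1.add_atTop tbig).atTop_add tD).congr' heq
  · -- limit at 0⁺
    set L0 := nhdsWithin (0:ℝ) (Set.Ioi 0) with hL0
    have hmem : Set.Ioo (0:ℝ) 1 ∈ L0 :=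
      Ioo_mem_nhdsGT_of_mem (by constructor <;> norm_num)
    have heq : ∀ᶠ u in L0,
        (1+y) * Real.log u
          + (-(Real.log |u-1|) + (1/2 - x) * Real.log ((u-1)^2 / DD α u))
          = fR α x y u := by
      filter_upwards [hmem] with u hu
      have hu1 : u ≠ 1 := ne_of_lt hu.2
      rw [fR, r2R_eq α hα0 u hu.1 hu1]
      ring
    have hD0 : DD α 0 = 1 := by
      simp [DD]
    have t2 : Tendsto (fun u : ℝ =>
        -(Real.log |u-1|) + (1/2 - x) * Real.log ((u-1)^2 / DD α u)) L0 (nhds 0) := by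
      have c1 : ContinuousAt (fun u : ℝ => Real.log |u-1|) 0 := by
        have habs : ContinuousAt (fun u : ℝ => |u - 1|) 0 := by fun_prop
        exact ContinuousAt.comp (g := Real.log) (f := fun u : ℝ => |u - 1|) (x := (0:ℝ))
          (Real.continuousAt_log (by norm_num : |(0:ℝ)-1| ≠ 0)) habs
      have cden : ContinuousAt (fun u : ℝ => (u-1)^2 / DD α u) 0 := by
        apply ContinuousAt.div
        · exact (((continuous_id.sub continuous_const).pow 2)).continuousAt
        · exact (DD_continuous α).continuousAt
        · rw [hD0]; norm_num
      have c2 : ContinuousAt (fun u : ℝ => Real.log ((u-1)^2 / DD α u)) 0 := by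
        apply (Real.continuousAt_log ?_).comp cden
        rw [hD0]; norm_num
      have h2 : Tendsto (fun u : ℝ =>
          -(Real.log |u-1|) + (1/2 - x) * Real.log ((u-1)^2 / DD α u)) L0
          (nhds (-(Real.log |(0:ℝ)-1|) + (1/2 - x) * Real.log (((0:ℝ)-1)^2 / DD α 0))) :=
        ((c1.neg).add (c2.const_mul (1/2 - x))).continuousWithinAt (s := Set.Ioi (0:ℝ))
      have h3 : (-(Real.log |(0:ℝ)-1|) + (1/2 - x) * Real.log (((0:ℝ)-1)^2 / DD α 0))
          = 0 := by norm_num [hD0]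
      rw [h3] at h2
      exact h2
    have t1 : Tendsto (fun u : ℝ => (1+y) * Real.log u) L0 atBot :=
      (tendsto_const_mul_atBot_of_pos (by linarith)).2
        Real.tendsto_log_nhdsGT_zero
    exact (t1.atBot_add t2).congr' heq
  · -- limit at +∞
    have hb : 0 < α + α⁻¹ := by positivity
    have hinv : Tendsto (fun u : ℝ => (u-1)⁻¹) atTop (nhds 0) := by
      have := tendsto_inv_atTop_zero.comp
        (tendsto_atTop_add_const_right atTop (-1 : ℝ) tendsto_id)
      simpa [sub_eq_add_neg, Function.comp_def] using this
    have hgt : ∀ᶠ u : ℝ in atTop, 1 < u := eventually_gt_atTop 1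
    have hg : Tendsto (fun u : ℝ => u/(u-1)) atTop (nhds 1) := by
      have h : Tendsto (fun u : ℝ => 1 + (u-1)⁻¹) atTop (nhds 1) := by
        simpa using (tendsto_const_nhds (x := (1:ℝ)) (f := atTop)).add hinv
      refine h.congr' ?_
      filter_upwards [hgt] with u hu
      have h1 : u - 1 ≠ 0 := sub_ne_zero.2 (ne_of_gt hu)
      field_simp
      ring
    have hq : Tendsto (fun u : ℝ =>
        Real.sqrt ((u^3 + (α^2 + (α^2)⁻¹) * u^2 + u)/(u-1)^4)) atTop (nhds 0) := by
      have hinner : Tendsto (fun u : ℝ =>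
          (u^3 + (α^2 + (α^2)⁻¹) * u^2 + u)/(u-1)^4) atTop (nhds 0) := by
        have h : Tendsto (fun u : ℝ =>
            (u/(u-1))^3 * (u-1)⁻¹ + (α^2 + (α^2)⁻¹) * ((u/(u-1))^2 * ((u-1)⁻¹)^2)
              + (u/(u-1)) * ((u-1)⁻¹)^3) atTop
            (nhds ((1:ℝ)^3 * 0 + (α^2 + (α^2)⁻¹) * ((1:ℝ)^2 * 0^2) + 1 * 0^3)) := by
          exact (((hg.pow 3).mul hinv).add
            ((((hg.pow 2).mul (hinv.pow 2)).const_mul _))).add (hg.mul (hinv.pow 3))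
        norm_num at h
        refine h.congr' ?_
        filter_upwards [hgt] with u hu
        have h1 : u - 1 ≠ 0 := sub_ne_zero.2 (ne_of_gt hu)
        field_simp
      have hs := (Real.continuous_sqrt.tendsto 0).comp hinner
      simpa [Function.comp_def] using hs
    have hDratio : Tendsto (fun u : ℝ => DD α u / (u-1)^2) atTop (nhds 1) := by
      have h : Tendsto (fun u : ℝ =>
          (u/(u-1) + (u-1)⁻¹)^2 + 2 * (α^2 + (α^2)⁻¹) * ((u/(u-1)) * (u-1)⁻¹)
            + 2 * (α + α⁻¹) *
              Real.sqrt ((u^3 + (α^2 + (α^2)⁻¹) * u^2 + u)/(u-1)^4)) atTop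
          (nhds (((1:ℝ) + 0)^2 + 2 * (α^2 + (α^2)⁻¹) * ((1:ℝ) * 0) + 2 * (α + α⁻¹) * 0)) := by
        exact (((hg.add hinv).pow 2).add
          ((hg.mul hinv).const_mul _)).add (hq.const_mul _)
      norm_num at h
      refine h.congr' ?_
      filter_upwards [hgt] with u hu
      have hu0 : (0:ℝ) < u := lt_trans one_pos hu
      have h1 : u - 1 ≠ 0 := sub_ne_zero.2 (ne_of_gt hu)
      have hsq : Real.sqrt ((u^3 + (α^2 + (α^2)⁻¹) * u^2 + u)/(u-1)^4)
          = Real.sqrt (u^3 + (α^2 + (α^2)⁻¹) * u^2 + u) / (u-1)^2 := by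
        rw [Real.sqrt_div (P_nonneg α u hu0.le),
          show (u-1)^4 = ((u-1)^2)^2 by ring, Real.sqrt_sq (sq_nonneg _)]
      rw [hsq, DD]
      field_simp
    have hr2 : Tendsto (r2R α) atTop (nhds 1) := by
      have h := (hDratio.inv₀ one_ne_zero)
      norm_num at h
      refine h.congr' ?_
      filter_upwards [hgt] with u hu
      have hu0 : (0:ℝ) < u := lt_trans one_pos hu
      rw [r2R_eq α hα0 u hu0 (ne_of_gt hu)]
    have heq : ∀ᶠ u : ℝ in atTop,
        y * Real.log u + (Real.log (u/(u-1)) + (1/2 - x) * Real.log (r2R α u))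
          = fR α x y u := by
      filter_upwards [hgt] with u hu
      have hu0 : (0:ℝ) < u := lt_trans one_pos hu
      have h1 : u - 1 ≠ 0 := sub_ne_zero.2 (ne_of_gt hu)
      rw [fR, abs_of_pos (by linarith : (0:ℝ) < u - 1),
        Real.log_div (ne_of_gt hu0) h1]
      ring
    have t1 : Tendsto (fun u : ℝ => y * Real.log u) atTop atBot :=
      (tendsto_const_mul_atBot_of_neg hy0).2 Real.tendsto_log_atTop
    have t2 : Tendsto (fun u : ℝ =>
        Real.log (u/(u-1)) + (1/2 - x) * Real.log (r2R α u)) atTop (nhds 0) := by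
      have ha : Tendsto (fun u : ℝ => Real.log (u/(u-1))) atTop (nhds 0) := by
        have := (Real.continuousAt_log one_ne_zero).tendsto.comp hg
        simpa [Function.comp_def] using this
      have hbt : Tendsto (fun u : ℝ => (1/2 - x) * Real.log (r2R α u)) atTop (nhds 0) := by
        have := ((Real.continuousAt_log one_ne_zero).tendsto.comp hr2).const_mul (1/2 - x)
        simpa using this
      simpa using ha.add hbt
    exact (t1.atBot_add t2).congr' heq
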